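/- In the formal power series ring (ℚ[q])⟦t⟧, the factors 1 − t, 1 − t², 1 − q·t⁶, 1 − q²·t⁸ and 1 − q³·t¹² are invertible, and every t-coefficient of the power series f(q,t) · ((1 − t)(1 − t²)(1 − q·t⁶)(1 − q²·t⁸)(1 − q³·t¹²))⁻¹ is a polynomial in q all of whose coefficients are nonnegative integers. -/

import Mathlib

/-
The numerator splits as `f = (1 - t) H₁ + (1 - t²) H₂ + (1 - q t⁶) H₃` with `H₁, H₂, H₃` having
coefficients in `ℕ[q]`. Dividing by the denominator, each summand becomes `Hᵢ` times four of the
geometric series `(1 - qᵃ tᵇ)⁻¹ = ∑ₖ qᵃᵏ tᵇᵏ`, so the quotient is the image of a power series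
over `ℕ[q]`.
-/

open PowerSeries

/-- The variable `q`, viewed as a constant of the power series ring `(ℚ[q])⟦t⟧`. -/
noncomputable def qv : PowerSeries (Polynomial ℚ) :=
  (PowerSeries.C (R := Polynomial ℚ)) Polynomial.X

/-- Igusa's numerator polynomial
`f(q,t) = 1 + t² + t³ + t⁴ − 2t⁵ + 2qt⁶ + (q−1)t⁷ + qt⁸ − qt⁹ + (q−1)qt¹⁰ − 2qt¹¹ + 2q²t¹²
  − q²t¹³ − q²t¹⁴ − q²t¹⁵ − q²t¹⁷`, viewed as an element of `(ℚ[q])⟦t⟧`. -/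
noncomputable def igusaF : PowerSeries (Polynomial ℚ) :=
  1 + X ^ 2 + X ^ 3 + X ^ 4 - 2 * X ^ 5 + 2 * qv * X ^ 6 + (qv - 1) * X ^ 7
    + qv * X ^ 8 - qv * X ^ 9 + (qv - 1) * qv * X ^ 10 - 2 * qv * X ^ 11
    + 2 * qv ^ 2 * X ^ 12 - qv ^ 2 * X ^ 13 - qv ^ 2 * X ^ 14 - qv ^ 2 * X ^ 15
    - qv ^ 2 * X ^ 17

theorem Ring.inverse_eq_of_mul_eq_one {M₀ : Type*} [CommMonoidWithZero M₀] {a b : M₀}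
    (h : a * b = 1) : Ring.inverse a = b := by
  simpa [h] using Ring.inverse_mul_cancel_left a b (.of_mul_eq_one b h)

namespace PowerSeries

variable {R S : Type*}

noncomputable def geomSeries [Semiring R] (r : R) (b : ℕ) : PowerSeries R :=
  mk fun n => if b ∣ n then r ^ (n / b) else 0

theorem map_geomSeries [Semiring R] [Semiring S] (f : R →+* S) (r : R) (b : ℕ) :
    map f (geomSeries r b) = geomSeries (f r) b := by
  ext n
  simp [geomSeries, apply_ite f]

theorem geomSeries_eq_expand_rescale [CommRing R] (r : R) {b : ℕ} (hb : b ≠ 0) :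
    geomSeries r b = expand b hb (rescale r (mk 1)) := by
  ext n
  simp [geomSeries, coeff_expand, coeff_rescale]

theorem one_sub_C_mul_X_pow_mul_geomSeries [CommRing R] (r : R) {b : ℕ} (hb : b ≠ 0) :
    (1 - C r * X ^ b) * geomSeries r b = 1 := by
  have h : 1 - C r * X ^ b = expand b hb (rescale r (1 - X)) := by
    simp [rescale_X, expand_X, expand_C]
  rw [h, geomSeries_eq_expand_rescale r hb, ← map_mul, ← map_mul, mul_comm,
    mk_one_mul_one_sub_eq_one, map_one, map_one]

end PowerSeries

local notation "ι" => PowerSeries.map (Polynomial.mapRingHom (Nat.castRingHom ℚ))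

theorem coeff_coeff_map_natCast (A : PowerSeries (Polynomial ℕ)) (n k : ℕ) :
    Polynomial.coeff (PowerSeries.coeff (R := Polynomial ℚ) n (ι A)) k
      = ((Polynomial.coeff (PowerSeries.coeff n A) k : ℕ) : ℚ) := by
  simp

theorem one_sub_qv_pow_mul_X_pow_mul_geomSeries (a : ℕ) {b : ℕ} (hb : b ≠ 0) :
    (1 - qv ^ a * X ^ b) * geomSeries (Polynomial.X ^ a) b = 1 := by
  rw [qv, ← map_pow]
  exact one_sub_C_mul_X_pow_mul_geomSeries _ hb

noncomputable def qvNat : PowerSeries (Polynomial ℕ) :=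
  C Polynomial.X

noncomputable def igusaH₁ : PowerSeries (Polynomial ℕ) :=
  1 + X + X ^ 2 + X ^ 3 + 2 * X ^ 4 + X ^ 5 + X ^ 6
    + qvNat * (X ^ 6 + X ^ 7 + 2 * X ^ 8 + X ^ 9 + X ^ 10)
    + qvNat ^ 2 * (X ^ 10 + X ^ 11 + 3 * X ^ 12 + 2 * X ^ 13 + 2 * X ^ 14 + X ^ 15 + X ^ 16)

noncomputable def igusaH₂ : PowerSeries (Polynomial ℕ) :=
  X ^ 3 + qvNat * (X ^ 6 + X ^ 7 + X ^ 8 + X ^ 9)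

noncomputable def igusaH₃ : PowerSeries (Polynomial ℕ) :=
  X ^ 2 + qvNat * X ^ 8

theorem igusaF_eq_sum_one_sub_mul :
    igusaF = (1 - X) * ι igusaH₁ + (1 - X ^ 2) * ι igusaH₂ + (1 - qv * X ^ 6) * ι igusaH₃ := by
  have hq : ι qvNat = qv := by simp [qvNat, qv]
  simp only [igusaF, igusaH₁, igusaH₂, igusaH₃, map_add, map_mul, map_pow, map_one, map_ofNat,
    PowerSeries.map_X, hq]
  ring

noncomputable def igusaQuotient : PowerSeries (Polynomial ℕ) :=
  igusaH₁ * (geomSeries 1 2 * geomSeries Polynomial.X 6 * geomSeries (Polynomial.X ^ 2) 8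
      * geomSeries (Polynomial.X ^ 3) 12)
    + igusaH₂ * (geomSeries 1 1 * geomSeries Polynomial.X 6 * geomSeries (Polynomial.X ^ 2) 8
      * geomSeries (Polynomial.X ^ 3) 12)
    + igusaH₃ * (geomSeries 1 1 * geomSeries 1 2 * geomSeries (Polynomial.X ^ 2) 8
      * geomSeries (Polynomial.X ^ 3) 12)

theorem igusaF_mul_inverse_denominator :
    igusaF * Ring.inverse ((1 - X) * (1 - X ^ 2) * (1 - qv * X ^ 6) *
      (1 - qv ^ 2 * X ^ 8) * (1 - qv ^ 3 * X ^ 12)) = ι igusaQuotient := by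
  have k₁ : (1 - X) * geomSeries (1 : Polynomial ℚ) 1 = 1 := by
    simpa using one_sub_qv_pow_mul_X_pow_mul_geomSeries 0 one_ne_zero
  have k₂ : (1 - X ^ 2) * geomSeries (1 : Polynomial ℚ) 2 = 1 := by
    simpa using one_sub_qv_pow_mul_X_pow_mul_geomSeries 0 two_ne_zero
  have k₃ : (1 - qv * X ^ 6) * geomSeries Polynomial.X 6 = 1 := by
    simpa using one_sub_qv_pow_mul_X_pow_mul_geomSeries 1 (by norm_num : 6 ≠ 0)
  have k₄ := one_sub_qv_pow_mul_X_pow_mul_geomSeries 2 (by norm_num : 8 ≠ 0)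
  have k₅ := one_sub_qv_pow_mul_X_pow_mul_geomSeries 3 (by norm_num : 12 ≠ 0)
  simp only [Ring.mul_inverse_rev, Ring.inverse_eq_of_mul_eq_one k₁,
    Ring.inverse_eq_of_mul_eq_one k₂, Ring.inverse_eq_of_mul_eq_one k₃,
    Ring.inverse_eq_of_mul_eq_one k₄, Ring.inverse_eq_of_mul_eq_one k₅, igusaQuotient, map_add,
    map_mul, map_geomSeries, map_one, map_pow, Polynomial.coe_mapRingHom, Polynomial.map_X,
    igusaF_eq_sum_one_sub_mul]
  set g₁ := geomSeries (1 : Polynomial ℚ) 1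
  set g₂ := geomSeries (1 : Polynomial ℚ) 2
  set g₃ := geomSeries (Polynomial.X : Polynomial ℚ) 6
  set g₄ := geomSeries (Polynomial.X ^ 2 : Polynomial ℚ) 8
  set g₅ := geomSeries (Polynomial.X ^ 3 : Polynomial ℚ) 12
  linear_combination ι igusaH₁ * (g₂ * g₃ * g₄ * g₅) * k₁ + ι igusaH₂ * (g₁ * g₃ * g₄ * g₅) * k₂
    + ι igusaH₃ * (g₁ * g₂ * g₄ * g₅) * k₃

/-- In `(ℚ[q])⟦t⟧`, the factors `1 − t`, `1 − t²`, `1 − q·t⁶`, `1 − q²·t⁸` and `1 − q³·t¹²`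
are invertible, and every `t`-coefficient of
`f(q,t) · ((1 − t)(1 − t²)(1 − q·t⁶)(1 − q²·t⁸)(1 − q³·t¹²))⁻¹`
is a polynomial in `q` all of whose coefficients are nonnegative integers. -/
theorem igusaF_div_denominator_coeffs_nonneg :
    IsUnit (1 - X : PowerSeries (Polynomial ℚ)) ∧
    IsUnit (1 - X ^ 2 : PowerSeries (Polynomial ℚ)) ∧
    IsUnit (1 - qv * X ^ 6) ∧
    IsUnit (1 - qv ^ 2 * X ^ 8) ∧
    IsUnit (1 - qv ^ 3 * X ^ 12) ∧
    ∀ n k : ℕ, ∃ m : ℕ,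
      Polynomial.coeff
        (PowerSeries.coeff (R := Polynomial ℚ) n
          (igusaF * Ring.inverse ((1 - X) * (1 - X ^ 2) * (1 - qv * X ^ 6) *
            (1 - qv ^ 2 * X ^ 8) * (1 - qv ^ 3 * X ^ 12)))) k = (m : ℚ) := by
  iterate 5 refine ⟨PowerSeries.isUnit_iff_constantCoeff.mpr (by simp [qv]), ?_⟩
  intro n k
  rw [igusaF_mul_inverse_denominator]
  exact ⟨_, coeff_coeff_map_natCast igusaQuotient n k⟩
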